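/- arXiv:2603.07809 — 2 statements merged into one kernel-verified Lean document; each statement's English description precedes it below -/
import Mathlib

section
/- Let G be a finite multigraph on a vertically ordered vertex set such that every vertex has at most two edges to lower vertices and at most two edges to higher vertices, and suppose the edge set of G is partitioned into alternating cycles. Let G_1 consist of the up-edges of each cycle and G_2 of the down-edges (with respect to a fixed traversal orientation of each cycle). Then neither G_1 nor G_2 contains a cycle; that is, G_1 and G_2 are forests. -/
/-! Common definitions: vertical (multi)graphs on `Fin n` (vertices ordered by height,
vertex `v` at height `(v : ℕ)`), edges stored as pairs `(lower, upper)`. -/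

/-- Number of edges of `E` from `v` to strictly lower vertices
(i.e. edges whose upper endpoint is `v`), with multiplicity. -/
def ldeg {n : ℕ} (E : Multiset (Fin n × Fin n)) (v : Fin n) : ℕ :=
  (E.filter (fun e => e.2 = v)).card

/-- Number of edges of `E` from `v` to strictly higher vertices
(i.e. edges whose lower endpoint is `v`), with multiplicity. -/
def hdeg {n : ℕ} (E : Multiset (Fin n × Fin n)) (v : Fin n) : ℕ :=
  (E.filter (fun e => e.1 = v)).card

/-- An alternating cycle: a closed walk `w 0, w 1, …, w (2m) = w 0` whose edges
alternately go up and down (odd-indexed vertices are above both cyclic neighbours). -/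
structure AltCycle (n : ℕ) where
  m : ℕ
  pos : 0 < m
  w : ℕ → Fin n
  closed : w (2 * m) = w 0
  up : ∀ j < m, w (2 * j) < w (2 * j + 1)
  down : ∀ j < m, w (2 * j + 2) < w (2 * j + 1)

/-- The up-edges of an alternating cycle (as `(lower, upper)` pairs). -/
def AltCycle.upEdges {n : ℕ} (C : AltCycle n) : Multiset (Fin n × Fin n) :=
  (Multiset.range C.m).map (fun j => (C.w (2 * j), C.w (2 * j + 1)))

/-- The down-edges of an alternating cycle (as `(lower, upper)` pairs). -/
def AltCycle.downEdges {n : ℕ} (C : AltCycle n) : Multiset (Fin n × Fin n) :=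
  (Multiset.range C.m).map (fun j => (C.w (2 * j + 2), C.w (2 * j + 1)))

/-- All edges of an alternating cycle. -/
def AltCycle.edges {n : ℕ} (C : AltCycle n) : Multiset (Fin n × Fin n) :=
  C.upEdges + C.downEdges

/-- The edge multiset `E` can be partitioned into alternating cycles. -/
def AltPartition {n : ℕ} (E : Multiset (Fin n × Fin n)) : Prop :=
  ∃ (k : ℕ) (Cs : Fin k → AltCycle n), E = ∑ i, (Cs i).edges

/-- The undirected edge between `a` and `b`, stored as a `(lower, upper)` pair. -/
def stepEdge {n : ℕ} (a b : Fin n) : Fin n × Fin n := if a < b then (a, b) else (b, a)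

/-- `E` contains a (vertex-simple) cycle: a closed walk with pairwise distinct vertices
whose (undirected) edge multiset is contained in `E`. -/
def HasCycle {n : ℕ} (E : Multiset (Fin n × Fin n)) : Prop :=
  ∃ (len : ℕ) (w : ℕ → Fin n), 0 < len ∧ w len = w 0 ∧
    (∀ i < len, ∀ j < len, w i = w j → i = j) ∧
    ((Multiset.range len).map (fun j => stepEdge (w j) (w (j + 1)))) ≤ E

/-- Reachability (connectivity) in the multigraph with edge multiset `E`. -/
def Reach {n : ℕ} (E : Multiset (Fin n × Fin n)) (a b : Fin n) : Prop :=
  Relation.ReflTransGen (fun x y => (x, y) ∈ E ∨ (y, x) ∈ E) a b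

/-- The connected component of `v` in `E` is a single vertex or a path along
vertices of strictly increasing height. -/
def IncPathComp {n : ℕ} (E : Multiset (Fin n × Fin n)) (v : Fin n) : Prop :=
  ∃ (m : ℕ) (p : Fin (m + 1) → Fin n), StrictMono p ∧
    (∀ u, Reach E v u ↔ ∃ i, p i = u) ∧
    (∀ i : Fin m, (p i.castSucc, p i.succ) ∈ E)

/-- The edges present at stage `j` of the upward lower-star filtration:
those whose upper endpoint has height at most `j`. -/
def levelEdges {n : ℕ} (E : Multiset (Fin n × Fin n)) (j : ℕ) : Multiset (Fin n × Fin n) :=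
  E.filter (fun e => (e.2 : ℕ) ≤ j)

/-- Death time (elder rule) of the 0-dimensional class created by vertex `v` in the
upward lower-star filtration: the first height at which `v` gets connected to a
strictly lower (older) vertex, or `∞` if this never happens. -/
noncomputable def death0 {n : ℕ} (E : Multiset (Fin n × Fin n)) (v : Fin n) : ℕ∞ :=
  sInf ((fun j : ℕ => (j : ℕ∞)) '' {j : ℕ | ∃ u, u < v ∧ Reach (levelEdges E j) u v})

/-- The 0-dimensional verbose persistence diagram in the up direction: one point
per vertex, born at the height of the vertex. -/
noncomputable def diag0 {n : ℕ} (E : Multiset (Fin n × Fin n)) : Multiset (ℕ × ℕ∞) :=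
  (Finset.univ.val : Multiset (Fin n)).map (fun v : Fin n => ((v : ℕ), death0 E v))

/-- Number of edges entering at height `j` (upper endpoint of height `j`). -/
def edgesAt {n : ℕ} (E : Multiset (Fin n × Fin n)) (j : ℕ) : ℕ :=
  (E.filter (fun e => (e.2 : ℕ) = j)).card

/-- Number of 0-dimensional points dying at height `j` in the verbose diagram. -/
noncomputable def deaths0At {n : ℕ} (E : Multiset (Fin n × Fin n)) (j : ℕ) : ℕ :=
  Nat.card {v : Fin n // death0 E v = (j : ℕ∞)}

/-- Number of 1-dimensional classes born at height `j`: edges entering at height `j`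
that are creators rather than destructors. -/
noncomputable def cyclesBornAt {n : ℕ} (E : Multiset (Fin n × Fin n)) (j : ℕ) : ℕ :=
  edgesAt E j - deaths0At E j

/-- The graph with the vertical order reversed (for the down direction). -/
def flipE {n : ℕ} (E : Multiset (Fin n × Fin n)) : Multiset (Fin n × Fin n) :=
  E.map (fun e => (e.2.rev, e.1.rev))

/-- Equality of the verbose persistence diagrams in the up direction. -/
def UpDiagEq {n : ℕ} (E1 E2 : Multiset (Fin n × Fin n)) : Prop :=
  diag0 E1 = diag0 E2 ∧ ∀ j, cyclesBornAt E1 j = cyclesBornAt E2 j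

/-- Equality of VPHTs for vertical graphs: the verbose diagrams agree in both the
up and the down direction. -/
def VPHTEq {n : ℕ} (E1 E2 : Multiset (Fin n × Fin n)) : Prop :=
  UpDiagEq E1 E2 ∧ UpDiagEq (flipE E1) (flipE E2)

/-- Number of connected components of the multigraph with edge multiset `E`. -/
noncomputable def numComponents {n : ℕ} (E : Multiset (Fin n × Fin n)) : ℕ :=
  Nat.card (Quot (Reach E))

/-- The edge multiset `E` can be partitioned into cycles (closed trails). -/
def CircuitPartition {n : ℕ} (E : Multiset (Fin n × Fin n)) : Prop :=
  ∃ (k : ℕ) (len : Fin k → ℕ) (w : Fin k → ℕ → Fin n),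
    (∀ i, 0 < len i) ∧ (∀ i, w i (len i) = w i 0) ∧
    (∀ i, ∀ j < len i, w i j ≠ w i (j + 1)) ∧
    (∑ i, (Multiset.range (len i)).map (fun j => stepEdge (w i j) (w i (j + 1)))) = E

/-!
At the top vertex of a closed walk both incident walk edges come from below, so a cycle in a
graph whose edges all go upwards forces some vertex to have at least two lower neighbours.
In an alternating cycle every peak `w (2j+1)` is the upper endpoint of exactly one up-edge and
one down-edge, so `ldeg G₁ = ldeg G₂ = ldeg G / 2 ≤ 1` everywhere.
-/

section Forests

variable {n : ℕ}

lemma stepEdge_fst (a b : Fin n) : (stepEdge a b).1 = min a b := by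
  unfold stepEdge
  split_ifs with h
  · exact (min_eq_left h.le).symm
  · exact (min_eq_right (not_lt.1 h)).symm

lemma stepEdge_snd (a b : Fin n) : (stepEdge a b).2 = max a b := by
  unfold stepEdge
  split_ifs with h
  · exact (max_eq_right h.le).symm
  · exact (max_eq_left (not_lt.1 h)).symm

lemma ldeg_eq_countP (E : Multiset (Fin n × Fin n)) (v : Fin n) :
    ldeg E v = E.countP (fun e => e.2 = v) :=
  (Multiset.countP_eq_card_filter _ _).symm

lemma ldeg_mono {E F : Multiset (Fin n × Fin n)} (h : E ≤ F) (v : Fin n) :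
    ldeg E v ≤ ldeg F v :=
  Multiset.card_le_card (Multiset.filter_le_filter _ h)

lemma ldeg_add (E F : Multiset (Fin n × Fin n)) (v : Fin n) :
    ldeg (E + F) v = ldeg E v + ldeg F v := by
  simp only [ldeg_eq_countP, Multiset.countP_add]

lemma ldeg_sum {ι : Type*} (s : Finset ι) (E : ι → Multiset (Fin n × Fin n)) (v : Fin n) :
    ldeg (∑ i ∈ s, E i) v = ∑ i ∈ s, ldeg (E i) v := by
  simp only [ldeg_eq_countP]
  exact map_sum (Multiset.countPAddMonoidHom _) E s

theorem HasCycle.exists_two_le_ldeg {F : Multiset (Fin n × Fin n)}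
    (hF : ∀ e ∈ F, e.1 < e.2) (hc : HasCycle F) : ∃ v, 2 ≤ ldeg F v := by
  obtain ⟨len, w, hlen, hclosed, -, hle⟩ := hc
  set f : ℕ → Fin n × Fin n := fun j => stepEdge (w j) (w (j + 1)) with hf
  have hstep : ∀ j < len, w j ≠ w (j + 1) := fun j hj => by
    have := hF (f j) (Multiset.mem_of_le hle (Multiset.mem_map_of_mem _ (Multiset.mem_range.2 hj)))
    rw [hf, stepEdge_fst, stepEdge_snd] at this
    exact min_lt_max.1 this
  obtain ⟨i, hi, hmax⟩ := (Finset.range len).exists_max_image w ⟨0, Finset.mem_range.2 hlen⟩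
  rw [Finset.mem_range] at hi
  have hmax' : ∀ j ≤ len, w j ≤ w i := fun j hj => by
    rcases hj.lt_or_eq with hj | rfl
    · exact hmax j (Finset.mem_range.2 hj)
    · exact hclosed ▸ hmax 0 (Finset.mem_range.2 hlen)
  obtain ⟨p, hp, hwp⟩ : ∃ p < len, w (p + 1) = w i := by
    rcases Nat.eq_zero_or_pos i with rfl | hi0
    · exact ⟨len - 1, by omega, by rw [Nat.sub_add_cancel hlen, hclosed]⟩
    · exact ⟨i - 1, by omega, by rw [Nat.sub_add_cancel hi0]⟩
  have hpi : p ≠ i := by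
    rintro rfl
    exact hstep p hp hwp.symm
  have hfp : (f p).2 = w i := by
    rw [hf, stepEdge_snd, hwp, max_eq_right (hwp ▸ hmax' p hp.le)]
  have hfi : (f i).2 = w i := by
    rw [hf, stepEdge_snd, max_eq_left (hmax' (i + 1) hi)]
  refine ⟨w i, ?_⟩
  calc 2 = ({p, i} : Finset ℕ).card := (Finset.card_pair hpi).symm
    _ ≤ ((Finset.range len).filter (fun j => (f j).2 = w i)).card := by
        refine Finset.card_le_card fun j hj => ?_
        rcases Finset.mem_insert.1 hj with rfl | hj
        · exact Finset.mem_filter.2 ⟨Finset.mem_range.2 hp, hfp⟩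
        · rw [Finset.mem_singleton.1 hj]
          exact Finset.mem_filter.2 ⟨Finset.mem_range.2 hi, hfi⟩
    _ = ldeg ((Multiset.range len).map f) (w i) := by
        rw [ldeg_eq_countP, Multiset.countP_map]
        rfl
    _ ≤ ldeg F (w i) := ldeg_mono hle _

theorem not_hasCycle_of_ldeg_le_one {F : Multiset (Fin n × Fin n)}
    (hF : ∀ e ∈ F, e.1 < e.2) (h1 : ∀ v, ldeg F v ≤ 1) : ¬ HasCycle F := fun hc =>
  let ⟨v, hv⟩ := hc.exists_two_le_ldeg hF
  absurd (h1 v) (by omega)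

namespace AltCycle

lemma ldeg_downEdges (C : AltCycle n) (v : Fin n) : ldeg C.downEdges v = ldeg C.upEdges v := by
  simp only [ldeg_eq_countP, upEdges, downEdges, Multiset.countP_map]

lemma ldeg_edges (C : AltCycle n) (v : Fin n) : ldeg C.edges v = 2 * ldeg C.upEdges v := by
  rw [edges, ldeg_add, ldeg_downEdges, two_mul]

lemma fst_lt_snd_of_mem_upEdges (C : AltCycle n) {e : Fin n × Fin n} (he : e ∈ C.upEdges) :
    e.1 < e.2 := by
  obtain ⟨j, hj, rfl⟩ := Multiset.mem_map.1 he
  exact C.up j (Multiset.mem_range.1 hj)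

lemma fst_lt_snd_of_mem_downEdges (C : AltCycle n) {e : Fin n × Fin n} (he : e ∈ C.downEdges) :
    e.1 < e.2 := by
  obtain ⟨j, hj, rfl⟩ := Multiset.mem_map.1 he
  exact C.down j (Multiset.mem_range.1 hj)

end AltCycle

end Forests

theorem halves_are_forests_general {n : ℕ} (E : Multiset (Fin n × Fin n))
    (k : ℕ) (Cs : Fin k → AltCycle n) (hpart : E = ∑ i, (Cs i).edges)
    (hl : ∀ v : Fin n, ldeg E v ≤ 2) :
    ¬ HasCycle (∑ i, (Cs i).upEdges) ∧ ¬ HasCycle (∑ i, (Cs i).downEdges) := by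
  have hup : ∀ v, ldeg (∑ i, (Cs i).upEdges) v ≤ 1 := fun v => by
    have := hl v
    rw [hpart, ldeg_sum] at this
    simp only [AltCycle.ldeg_edges, ← Finset.mul_sum, ← ldeg_sum] at this
    omega
  have hdown : ∀ v, ldeg (∑ i, (Cs i).downEdges) v = ldeg (∑ i, (Cs i).upEdges) v := fun v => by
    simp only [ldeg_sum, AltCycle.ldeg_downEdges]
  refine ⟨not_hasCycle_of_ldeg_le_one (fun e he => ?_) hup,
    not_hasCycle_of_ldeg_le_one (fun e he => ?_) (fun v => hdown v ▸ hup v)⟩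
  · obtain ⟨i, -, he⟩ := Multiset.mem_sum.1 he
    exact (Cs i).fst_lt_snd_of_mem_upEdges he
  · obtain ⟨i, -, he⟩ := Multiset.mem_sum.1 he
    exact (Cs i).fst_lt_snd_of_mem_downEdges he

/-- If a vertical multigraph with all `ldeg, hdeg ≤ 2` is partitioned
into alternating cycles, then the up-edge half `G₁` and down-edge half `G₂` are
forests (contain no cycle). -/
theorem halves_are_forests {n : ℕ} (E : Multiset (Fin n × Fin n))
    (k : ℕ) (Cs : Fin k → AltCycle n) (hpart : E = ∑ i, (Cs i).edges)
    (hl : ∀ v : Fin n, ldeg E v ≤ 2) (hh : ∀ v : Fin n, hdeg E v ≤ 2) :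
    ¬ HasCycle (∑ i, (Cs i).upEdges) ∧ ¬ HasCycle (∑ i, (Cs i).downEdges) :=
  halves_are_forests_general E k Cs hpart hl
end

section
/- Let G be a finite multigraph on a vertically ordered vertex set in which every vertex v satisfies ldeg_G(v) ∈ {0, 2} and hdeg_G(v) ∈ {0, 2}, and suppose G is partitioned into alternating cycles, splitting into up-edge graph G_1 and down-edge graph G_2. Then every connected component of G_1 (and of G_2) is either a single vertex or a path v_{i_1} < v_{i_2} < ... < v_{i_m} along vertices of strictly increasing height. -/
/-! Within one alternating cycle the up-edges and the down-edges have the same multiset of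
upper endpoints and, because the cycle closes up, the same multiset of lower endpoints. Hence
`G₁` and `G₂` have the same low and high degrees at every vertex, and as these add up to `0` or
`2` in `G`, each vertex has at most one up-edge and at most one down-edge in either half.
Directed reachability along such edges is then right- and left-unique, so any two vertices of a
component are comparable under it; listing a component by height, consecutive vertices must be
joined by an edge. -/

open Relation

namespace Relation

variable {α : Type*} {r : α → α → Prop} {a b : α}

theorem reflTransGen_or_swap_iff_of_unique (hr : Relator.RightUnique r)
    (hl : Relator.LeftUnique r) :
    ReflTransGen (fun x y => r x y ∨ r y x) a b ↔ ReflTransGen r a b ∨ ReflTransGen r b a := by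
  refine ⟨fun h => ?_, ?_⟩
  · induction h with
    | refl => exact Or.inl .refl
    | tail _ hstep ih =>
      rcases hstep, ih with ⟨hbc | hcb, hab | hba⟩
      · exact Or.inl (hab.tail hbc)
      · exact hba.total_of_right_unique hr (.single hbc)
      · have hswap : Relator.RightUnique (Function.swap r) := fun _ _ _ h h' => hl h h'
        simpa only [reflTransGen_swap, or_comm] using
          (reflTransGen_swap.2 hab).total_of_right_unique hswap (reflTransGen_swap.2 (.single hcb))
      · exact Or.inr (hba.head hcb)
  · rintro (h | h)
    · exact ReflTransGen.mono (fun _ _ => Or.inl) _ _ h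
    · exact ReflTransGen.mono (fun _ _ => Or.inr) _ _ (reflTransGen_swap.2 h)

theorem ReflTransGen.le_of_forall_lt [Preorder α] (hr : ∀ x y, r x y → x < y)
    (h : ReflTransGen r a b) : a ≤ b := by
  induction h with
  | refl => exact le_rfl
  | tail _ hbc ih => exact ih.trans (hr _ _ hbc).le

end Relation

theorem Multiset.map_range_succ_of_eq {α : Type*} (f : ℕ → α) {m : ℕ} (h : f m = f 0) :
    (range m).map (fun j => f (j + 1)) = (range m).map f := by
  have hshift : range (m + 1) = 0 ::ₘ (range m).map (· + 1) := by
    rw [← coe_range, List.range_succ_eq_map]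
    rfl
  have hcons := congrArg (map f) ((range_succ m).symm.trans hshift)
  rwa [map_cons, map_cons, map_map, h, cons_inj_right, eq_comm] at hcons

theorem Multiset.nodup_of_count_add_self {α : Type*} [DecidableEq α] {s : Multiset α}
    (h : ∀ a, count a (s + s) = 0 ∨ count a (s + s) = 2) : s.Nodup :=
  nodup_iff_count_le_one.2 fun a => by have := h a; rw [count_add] at this; omega

section Unique

variable {α β : Type*} {E : Multiset (α × β)}

theorem rightUnique_of_nodup_map_fst (h : (E.map Prod.fst).Nodup) :
    Relator.RightUnique fun a b => (a, b) ∈ E := fun _ _ _ hab hac =>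
  (Prod.ext_iff.1 (Multiset.inj_on_of_nodup_map h _ hab _ hac rfl)).2

theorem leftUnique_of_nodup_map_snd (h : (E.map Prod.snd).Nodup) :
    Relator.LeftUnique fun a b => (a, b) ∈ E := fun _ _ _ hac hbc =>
  (Prod.ext_iff.1 (Multiset.inj_on_of_nodup_map h _ hac _ hbc rfl)).1

end Unique

section VerticalGraph

variable {n : ℕ}

theorem ldeg_eq_count (E : Multiset (Fin n × Fin n)) (v : Fin n) :
    ldeg E v = (E.map Prod.snd).count v := by
  rw [Multiset.count_map, ldeg]
  simp only [eq_comm]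

theorem hdeg_eq_count (E : Multiset (Fin n × Fin n)) (v : Fin n) :
    hdeg E v = (E.map Prod.fst).count v := by
  rw [Multiset.count_map, hdeg]
  simp only [eq_comm]

theorem Reach.symm {E : Multiset (Fin n × Fin n)} {a b : Fin n} (h : Reach E a b) :
    Reach E b a :=
  ReflTransGen.mono (fun _ _ => Or.symm) _ _ (reflTransGen_swap.2 h)

theorem incPathComp_of_unique {E : Multiset (Fin n × Fin n)} (hup : ∀ e ∈ E, e.1 < e.2)
    (hr : Relator.RightUnique fun a b => (a, b) ∈ E)
    (hl : Relator.LeftUnique fun a b => (a, b) ∈ E) (v : Fin n) : IncPathComp E v := by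
  classical
  have hup' : ∀ x y, (x, y) ∈ E → x < y := fun x y h => hup (x, y) h
  set S := Finset.univ.filter (Reach E v)
  have hv : v ∈ S := Finset.mem_filter.2 ⟨Finset.mem_univ v, .refl⟩
  have hS : S.card = S.card - 1 + 1 := (Nat.succ_pred_eq_of_pos (Finset.card_pos.2 ⟨v, hv⟩)).symm
  set p := S.orderEmbOfFin hS
  have hp : ∀ u, Reach E v u ↔ ∃ i, p i = u := fun u => by
    rw [← Set.mem_range, Finset.range_orderEmbOfFin]
    simp [S]
  refine ⟨S.card - 1, p, p.strictMono, hp, fun i => ?_⟩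
  have hlt : p i.castSucc < p i.succ := p.strictMono i.castSucc_lt_succ
  have hreach : Reach E (p i.castSucc) (p i.succ) :=
    ((hp _).2 ⟨_, rfl⟩).symm.trans ((hp _).2 ⟨_, rfl⟩)
  have hdir : ReflTransGen (fun x y => (x, y) ∈ E) (p i.castSucc) (p i.succ) :=
    ((reflTransGen_or_swap_iff_of_unique hr hl).1 hreach).resolve_right fun h =>
      (h.le_of_forall_lt hup').not_gt hlt
  -- The first vertex after `p i.castSucc` on this directed path lies in the component,
  -- strictly above `p i.castSucc` and not above `p i.succ`, so it is `p i.succ`.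
  obtain ⟨c, hc, hcb⟩ := hdir.cases_head.resolve_left hlt.ne
  obtain ⟨j, rfl⟩ := (hp c).1 (((hp _).2 ⟨_, rfl⟩).tail (Or.inl hc))
  have hj : j = i.succ :=
    le_antisymm (p.le_iff_le.1 (hcb.le_of_forall_lt hup'))
      (Fin.castSucc_lt_iff_succ_le.1 (p.lt_iff_lt.1 (hup' _ _ hc)))
  rwa [hj] at hc

end VerticalGraph

namespace AltCycle

variable {n : ℕ} (C : AltCycle n)

theorem map_snd_upEdges : C.upEdges.map Prod.snd = C.downEdges.map Prod.snd := by
  simp only [upEdges, downEdges, Multiset.map_map, Function.comp_def]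

theorem map_fst_upEdges : C.upEdges.map Prod.fst = C.downEdges.map Prod.fst := by
  simp only [upEdges, downEdges, Multiset.map_map, Function.comp_def]
  exact (Multiset.map_range_succ_of_eq (fun j => C.w (2 * j)) C.closed).symm

theorem lt_of_mem_upEdges {e : Fin n × Fin n} (he : e ∈ C.upEdges) : e.1 < e.2 := by
  obtain ⟨j, hj, rfl⟩ := Multiset.mem_map.1 he
  exact C.up j (Multiset.mem_range.1 hj)

theorem lt_of_mem_downEdges {e : Fin n × Fin n} (he : e ∈ C.downEdges) : e.1 < e.2 := by
  obtain ⟨j, hj, rfl⟩ := Multiset.mem_map.1 he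
  exact C.down j (Multiset.mem_range.1 hj)

end AltCycle

/-- If a vertical multigraph with all `ldeg, hdeg ∈ {0,2}` is
partitioned into alternating cycles, every connected component of the up-edge half
`G₁` and of the down-edge half `G₂` is a single vertex or a path along vertices of
strictly increasing height. -/
theorem halves_components_increasing_paths {n : ℕ} (E : Multiset (Fin n × Fin n))
    (k : ℕ) (Cs : Fin k → AltCycle n) (hpart : E = ∑ i, (Cs i).edges)
    (hl : ∀ v : Fin n, ldeg E v = 0 ∨ ldeg E v = 2)
    (hh : ∀ v : Fin n, hdeg E v = 0 ∨ hdeg E v = 2) :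
    ∀ v : Fin n,
      IncPathComp (∑ i, (Cs i).upEdges) v ∧ IncPathComp (∑ i, (Cs i).downEdges) v := by
  set G₁ := ∑ i, (Cs i).upEdges
  set G₂ := ∑ i, (Cs i).downEdges
  have hE : E = G₁ + G₂ := by rw [hpart, ← Finset.sum_add_distrib]; rfl
  have hfst : G₁.map Prod.fst = G₂.map Prod.fst := by
    rw [← Multiset.coe_mapAddMonoidHom, map_sum, map_sum]
    simp only [Multiset.coe_mapAddMonoidHom, AltCycle.map_fst_upEdges]
  have hsnd : G₁.map Prod.snd = G₂.map Prod.snd := by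
    rw [← Multiset.coe_mapAddMonoidHom, map_sum, map_sum]
    simp only [Multiset.coe_mapAddMonoidHom, AltCycle.map_snd_upEdges]
  have hfst_nodup : (G₁.map Prod.fst).Nodup := Multiset.nodup_of_count_add_self fun v => by
    simpa only [hdeg_eq_count, hE, Multiset.map_add, ← hfst] using hh v
  have hsnd_nodup : (G₁.map Prod.snd).Nodup := Multiset.nodup_of_count_add_self fun v => by
    simpa only [ldeg_eq_count, hE, Multiset.map_add, ← hsnd] using hl v
  have hup₁ : ∀ e ∈ G₁, e.1 < e.2 := fun e he => by
    obtain ⟨i, -, hi⟩ := Multiset.mem_sum.1 he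
    exact (Cs i).lt_of_mem_upEdges hi
  have hup₂ : ∀ e ∈ G₂, e.1 < e.2 := fun e he => by
    obtain ⟨i, -, hi⟩ := Multiset.mem_sum.1 he
    exact (Cs i).lt_of_mem_downEdges hi
  intro v
  exact ⟨incPathComp_of_unique hup₁ (rightUnique_of_nodup_map_fst hfst_nodup)
      (leftUnique_of_nodup_map_snd hsnd_nodup) v,
    incPathComp_of_unique hup₂ (rightUnique_of_nodup_map_fst (hfst ▸ hfst_nodup))
      (leftUnique_of_nodup_map_snd (hsnd ▸ hsnd_nodup)) v⟩
end
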